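/- For every left-right pair (L,R) of matrices in SL₂(ℕ₀), the directed graph F(L,R) contains no directed cycles: there is no z ∈ D₀ and nonempty finite sequence T₀, T₁, …, T_{n−1} with each T_i ∈ {L,R} such that T_{n−1}(⋯(T₁(T₀(z)))⋯) = z. -/

import Mathlib

/-!
Every matrix of SL₂(ℕ₀) maps D₀ into itself, so a word `T₀, …, T_{n-1}` in `L` and `R` acts on
D₀ as the single matrix `M = T_{n-1} ⋯ T₀`. Since the entries are nonnegative, a product of such
matrices can only be the identity if every factor is, so `M ≠ 1`. Finally a non-identity matrix
of SL₂(ℕ₀) has no fixed point in D₀: comparing imaginary and real parts of `Mz = z` forces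
`c (x² + y²) + b = 0`, hence `b = c = 0` and then `M = 1`.
-/

/-- The open first quadrant of "positive" complex numbers. -/
def D0 : Set ℂ := {z : ℂ | 0 < z.re ∧ 0 < z.im}

/-- A 2×2 matrix with nonnegative integer entries has determinant 1. -/
def SL2N (T : Matrix (Fin 2) (Fin 2) ℕ) : Prop :=
  T 0 0 * T 1 1 = T 0 1 * T 1 0 + 1

/-- The Möbius action of such a matrix on a complex number. -/
noncomputable def act (T : Matrix (Fin 2) (Fin 2) ℕ) (z : ℂ) : ℂ :=
  ((T 0 0 : ℂ) * z + (T 0 1 : ℂ)) / ((T 1 0 : ℂ) * z + (T 1 1 : ℂ))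

/-- A pair of non-identity matrices in SL₂(ℕ₀) is a left-right pair if
`L(D₀) ∩ R(D₀) = ∅`. -/
def LeftRightPair (L R : Matrix (Fin 2) (Fin 2) ℕ) : Prop :=
  SL2N L ∧ SL2N R ∧ L ≠ 1 ∧ R ≠ 1 ∧ ∀ z₁ ∈ D0, ∀ z₂ ∈ D0, act L z₁ ≠ act R z₂

open Matrix

namespace SL2N

variable {A B : Matrix (Fin 2) (Fin 2) ℕ}

theorem one : SL2N 1 := by
  simp [SL2N]

theorem mul (hA : SL2N A) (hB : SL2N B) : SL2N (A * B) := by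
  unfold SL2N at *
  simp only [mul_apply, Fin.sum_univ_two]
  zify at hA hB ⊢
  linear_combination (B 0 0 * B 1 1 - B 0 1 * B 1 0) * hA + hB

theorem list_prod {l : List (Matrix (Fin 2) (Fin 2) ℕ)} (hl : ∀ T ∈ l, SL2N T) :
    SL2N l.prod := by
  induction l with
  | nil => exact one
  | cons T l ih =>
    rw [List.prod_cons]
    exact (hl T List.mem_cons_self).mul (ih fun S hS => hl S (List.mem_cons_of_mem T hS))

theorem apply_zero_zero_pos (hA : SL2N A) : 0 < A 0 0 :=
  Nat.pos_of_ne_zero fun h => by simp [SL2N, h] at hA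

theorem apply_one_one_pos (hA : SL2N A) : 0 < A 1 1 :=
  Nat.pos_of_ne_zero fun h => by simp [SL2N, h] at hA

theorem eq_one_of_apply_zero_one_of_apply_one_zero (hA : SL2N A) (hb : A 0 1 = 0)
    (hc : A 1 0 = 0) : A = 1 := by
  have had : A 0 0 * A 1 1 = 1 := by simpa [SL2N, hb] using hA
  have ha := Nat.eq_one_of_mul_eq_one_right had
  have hd := Nat.eq_one_of_mul_eq_one_left had
  ext i j
  fin_cases i <;> fin_cases j <;> simp [ha, hd, hb, hc]

theorem eq_one_of_mul_eq_one (hA : SL2N A) (hB : SL2N B) (h : A * B = 1) : A = 1 := by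
  have entry (i j : Fin 2) :
      A i 0 * B 0 j + A i 1 * B 1 j = (1 : Matrix (Fin 2) (Fin 2) ℕ) i j := by
    simpa [mul_apply, Fin.sum_univ_two] using congrFun (congrFun h i) j
  have e01 := entry 0 1
  have e10 := entry 1 0
  simp only [one_apply_ne (by decide : (0 : Fin 2) ≠ 1),
    one_apply_ne (by decide : (1 : Fin 2) ≠ 0), Nat.add_eq_zero_iff, mul_eq_zero] at e01 e10
  have hB0 := hB.apply_zero_zero_pos
  have hB1 := hB.apply_one_one_pos
  exact hA.eq_one_of_apply_zero_one_of_apply_one_zero (by omega) (by omega)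

theorem list_prod_ne_one {l : List (Matrix (Fin 2) (Fin 2) ℕ)}
    (hl : ∀ T ∈ l, SL2N T ∧ T ≠ 1) (hne : l ≠ []) : l.prod ≠ 1 := by
  obtain ⟨T, l, rfl⟩ := List.exists_cons_of_ne_nil hne
  rw [List.prod_cons]
  have hT := hl T List.mem_cons_self
  exact fun h => hT.2 <| hT.1.eq_one_of_mul_eq_one
    (list_prod fun S hS => (hl S (List.mem_cons_of_mem T hS)).1) h

end SL2N

section Action

variable {T S : Matrix (Fin 2) (Fin 2) ℕ} {z : ℂ}

theorem act_denom_ne_zero (hT : SL2N T) (hz : z ∈ D0) :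
    (T 1 0 : ℂ) * z + (T 1 1 : ℂ) ≠ 0 := by
  intro h
  have him := congrArg Complex.im h
  simp only [Complex.add_im, Complex.mul_im, Complex.natCast_re, Complex.natCast_im, zero_mul,
    add_zero, Complex.zero_im, mul_eq_zero, Nat.cast_eq_zero, hz.2.ne', or_false] at him
  have hre := congrArg Complex.re h
  simp only [him, CharP.cast_eq_zero, zero_mul, zero_add, Complex.natCast_re, Complex.zero_re,
    Nat.cast_eq_zero] at hre
  exact hT.apply_one_one_pos.ne' hre

theorem act_one : act 1 z = z := by
  simp [act]

theorem act_mem_D0 (hT : SL2N T) (hz : z ∈ D0) : act T z ∈ D0 := by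
  obtain ⟨hx, hy⟩ := hz
  have hnorm := Complex.normSq_pos.mpr (act_denom_ne_zero hT ⟨hx, hy⟩)
  have hdet : (T 0 0 : ℝ) * T 1 1 = T 0 1 * T 1 0 + 1 := by exact_mod_cast hT
  have ha : (0 : ℝ) ≤ T 0 0 := Nat.cast_nonneg _
  have hb : (0 : ℝ) ≤ T 0 1 := Nat.cast_nonneg _
  have hc : (0 : ℝ) ≤ T 1 0 := Nat.cast_nonneg _
  have hd : (0 : ℝ) ≤ T 1 1 := Nat.cast_nonneg _
  constructor
  · rw [act, Complex.div_re, ← add_div]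
    refine div_pos ?_ hnorm
    simp only [Complex.add_re, Complex.add_im, Complex.mul_re, Complex.mul_im,
      Complex.natCast_re, Complex.natCast_im]
    nlinarith [mul_nonneg (mul_nonneg ha hc) (mul_self_nonneg z.re),
      mul_nonneg (mul_nonneg ha hc) (mul_self_nonneg z.im),
      mul_nonneg (mul_nonneg hb hc) hx.le, mul_nonneg hb hd, mul_nonneg (mul_nonneg ha hd) hx.le]
  · -- the numerator of the imaginary part is `det T · Im z`
    rw [act, Complex.div_im, ← sub_div]
    refine div_pos (lt_of_lt_of_eq hy ?_) hnorm
    simp only [Complex.add_re, Complex.add_im, Complex.mul_re, Complex.mul_im,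
      Complex.natCast_re, Complex.natCast_im]
    linear_combination -z.im * hdet

theorem act_act (hT : SL2N T) (hS : SL2N S) (hz : z ∈ D0) :
    act T (act S z) = act (T * S) z := by
  have hdS : z * S 1 0 + S 1 1 ≠ 0 := mul_comm z (S 1 0 : ℂ) ▸ act_denom_ne_zero hS hz
  have hdT := act_denom_ne_zero hT (act_mem_D0 hS hz)
  unfold act at hdT ⊢
  rw [div_eq_div_iff hdT (act_denom_ne_zero (hT.mul hS) hz)]
  simp only [mul_apply, Fin.sum_univ_two, Nat.cast_add, Nat.cast_mul]
  field_simp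
  ring

theorem foldl_act_eq_act_reverse_prod {w : List (Matrix (Fin 2) (Fin 2) ℕ)}
    (hw : ∀ T ∈ w, SL2N T) (hz : z ∈ D0) :
    w.foldl (fun x T => act T x) z = act w.reverse.prod z := by
  induction w generalizing z with
  | nil => exact act_one.symm
  | cons T w ih =>
    have hT := hw T List.mem_cons_self
    have hw' : ∀ S ∈ w, SL2N S := fun S hS => hw S (List.mem_cons_of_mem T hS)
    rw [List.foldl_cons, ih hw' (act_mem_D0 hT hz),
      act_act (SL2N.list_prod fun S hS => hw' S (List.mem_reverse.mp hS)) hT hz,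
      List.reverse_cons, List.prod_append, List.prod_singleton]

theorem act_ne_self (hT : SL2N T) (hT1 : T ≠ 1) (hz : z ∈ D0) : act T z ≠ z := by
  intro heq
  obtain ⟨hx, hy⟩ := hz
  have hfix : (T 0 0 : ℂ) * z + T 0 1 = z * ((T 1 0 : ℂ) * z + T 1 1) := by
    rw [act, div_eq_iff (act_denom_ne_zero hT ⟨hx, hy⟩)] at heq
    linear_combination heq
  have hre := congrArg Complex.re hfix
  have him := congrArg Complex.im hfix
  simp only [Complex.add_re, Complex.add_im, Complex.mul_re, Complex.mul_im,
    Complex.natCast_re, Complex.natCast_im] at hre him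
  have hb : (0 : ℝ) ≤ T 0 1 := Nat.cast_nonneg _
  have hc : (0 : ℝ) ≤ T 1 0 := Nat.cast_nonneg _
  have hdiag : (T 0 0 : ℝ) = 2 * T 1 0 * z.re + T 1 1 :=
    mul_right_cancel₀ hy.ne' (by linear_combination him)
  have hkey : (T 1 0 : ℝ) * (z.re ^ 2 + z.im ^ 2) + T 0 1 = 0 := by
    linear_combination hre - z.re * hdiag
  have hc0 : (T 1 0 : ℝ) = 0 := by nlinarith [mul_pos hx hx, mul_pos hy hy]
  have hb0 : (T 0 1 : ℝ) = 0 := by nlinarith [mul_pos hx hx, mul_pos hy hy]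
  exact hT1 (hT.eq_one_of_apply_zero_one_of_apply_one_zero (by exact_mod_cast hb0)
    (by exact_mod_cast hc0))

end Action

/-- The graph F(L,R) has no directed cycles: applying a nonempty word in
L and R to a point of D₀ never returns the same point. -/
theorem no_directed_cycle (L R : Matrix (Fin 2) (Fin 2) ℕ)
    (h : LeftRightPair L R) (z : ℂ) (hz : z ∈ D0)
    (w : List (Matrix (Fin 2) (Fin 2) ℕ)) (hne : w ≠ [])
    (hw : ∀ T ∈ w, T = L ∨ T = R) :
    w.foldl (fun x T => act T x) z ≠ z := by
  obtain ⟨hL, hR, hL1, hR1, -⟩ := h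
  have hgen : ∀ T ∈ w.reverse, SL2N T ∧ T ≠ 1 := fun T hT => by
    rcases hw T (List.mem_reverse.mp hT) with rfl | rfl
    exacts [⟨hL, hL1⟩, ⟨hR, hR1⟩]
  rw [foldl_act_eq_act_reverse_prod (fun T hT => (hgen T (List.mem_reverse.mpr hT)).1) hz]
  exact act_ne_self (SL2N.list_prod fun T hT => (hgen T hT).1)
    (SL2N.list_prod_ne_one hgen (List.reverse_ne_nil_iff.mpr hne)) hz
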